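/- arXiv:1201.0429 — 4 statements merged into one kernel-verified Lean document; each statement's English description precedes it below -/
import Mathlib

section
/- There is an absolute constant C > 0 with the following property: let δ > 0 and let Z_1, ..., Z_R be independent real-valued random variables such that P(Z_r > 0) ≥ δ and P(Z_r < 0) ≥ δ for all r = 1, ..., R. Then P(S⁻(Z_1, ..., Z_R) ≤ δR/5) ≤ C·e^{−δR/3}, uniformly in δ and R. -/
open scoped Classical

/-- `S⁻(a₁, …, aₙ)`: the number of sign changes in a finite sequence of reals,
after deleting all zero terms. -/
noncomputable def signChangesList (l : List ℝ) : ℕ :=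
  let l' := l.filter (fun x => decide (x ≠ 0))
  (l'.zip l'.tail).countP (fun q => decide (q.1 * q.2 < 0))

/-- `S⁻` for a finite sequence given as a function `Fin n → ℝ`. -/
noncomputable def signChangesFin {n : ℕ} (a : Fin n → ℝ) : ℕ :=
  signChangesList (List.ofFn a)

open MeasureTheory ProbabilityTheory Filter

open scoped ENNReal

/-!
Chernoff bound for `q ^ S⁻` with `q = e⁻¹`. Prepending a fixed anchor `1` changes `S⁻` by at
most one. For an anchor `c ≠ 0`, prepending `x` multiplies `q ^ S⁻` by `q` exactly when
`c x < 0`, and the new anchor is `x` (or still `c` if `x = 0`). Integrating out the first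
coordinate of the product law of `Z` therefore contributes a factor
`1 - (1 - q) P(c Z₁ < 0) ≤ 1 - (1 - q) δ`, so `E q ^ S⁻(c, Z) ≤ (1 - (1 - q) δ) ^ R`.
Markov's inequality then gives `P(S⁻ ≤ δR/5) ≤ e · exp(δR/5 - (1 - e⁻¹) δR) ≤ e · exp(-δR/3)`,
as `1 - e⁻¹ > 8/15`.
-/

lemma signChangesList_zero_cons (l : List ℝ) :
    signChangesList (0 :: l) = signChangesList l := by
  simp [signChangesList]

lemma signChangesList_singleton (c : ℝ) : signChangesList [c] = 0 := by
  by_cases hc : c = 0 <;> simp [signChangesList, hc]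

lemma signChangesList_cons_cons (c x : ℝ) (l : List ℝ) :
    signChangesList (c :: x :: l) =
      (if c * x < 0 then 1 else 0) + signChangesList ((if x = 0 then c else x) :: l) := by
  by_cases hx : x = 0
  · subst hx
    by_cases hc : c = 0 <;> simp [signChangesList, hc]
  · by_cases hc : c = 0
    · simp [signChangesList, hc, hx]
    · simp [signChangesList, hc, hx, List.countP_cons]
      omega

lemma signChangesList_cons_le (c : ℝ) (l : List ℝ) :
    signChangesList (c :: l) ≤ signChangesList l + 1 := by
  induction l generalizing c with
  | nil => simp [signChangesList_singleton]
  | cons x l ih =>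
    rw [signChangesList_cons_cons]
    by_cases hx : x = 0
    · subst hx
      simpa [signChangesList_zero_cons] using ih c
    · simp only [hx, if_false]
      split_ifs <;> omega

lemma measurable_signChangesList_cons_ofFn_prod (n : ℕ) :
    Measurable fun p : ℝ × (Fin n → ℝ) ↦ signChangesList (p.1 :: List.ofFn p.2) := by
  induction n with
  | zero => simp [signChangesList_singleton]
  | succ n ih =>
    simp_rw [List.ofFn_succ, signChangesList_cons_cons]
    have h0 : Measurable fun p : ℝ × (Fin (n + 1) → ℝ) ↦ p.2 0 := by fun_prop
    refine .add (.ite (measurableSet_lt (measurable_fst.mul h0) measurable_const) measurable_const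
      measurable_const) (ih.comp (.prodMk (.ite (measurableSet_eq_fun h0 measurable_const)
      measurable_fst h0) (by fun_prop)))

lemma measurable_signChangesList_cons_ofFn (c : ℝ) (n : ℕ) :
    Measurable fun v : Fin n → ℝ ↦ signChangesList (c :: List.ofFn v) :=
  (measurable_signChangesList_cons_ofFn_prod n).comp (measurable_const.prodMk measurable_id)

lemma lintegral_pi_fin_succ {n : ℕ} {α : Type*} [MeasurableSpace α]
    (ν : Fin (n + 1) → Measure α) [∀ i, SigmaFinite (ν i)] {f : (Fin (n + 1) → α) → ℝ≥0∞}
    (hf : Measurable f) :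
    ∫⁻ v, f v ∂Measure.pi ν
      = ∫⁻ x, ∫⁻ t, f (Fin.cons x t) ∂Measure.pi (fun i ↦ ν i.succ) ∂ν 0 := by
  rw [← ((measurePreserving_piFinSuccAbove ν 0).symm).lintegral_comp_emb
    (MeasurableEquiv.measurableEmbedding _), lintegral_prod _ ?_]
  · simp_rw [MeasurableEquiv.piFinSuccAbove_symm_apply, Fin.insertNthEquiv, Equiv.coe_fn_mk,
      Fin.insertNth_zero]
    rfl
  · exact (hf.comp (MeasurableEquiv.measurable _)).aemeasurable

lemma le_measure_setOf_mul_neg {ν : Measure ℝ} {δ : ℝ≥0∞} (hpos : δ ≤ ν (Set.Ioi 0))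
    (hneg : δ ≤ ν (Set.Iio 0)) {c : ℝ} (hc : c ≠ 0) : δ ≤ ν {x | c * x < 0} := by
  rcases hc.lt_or_gt with hc | hc
  · convert hpos using 2
    ext x; simp [mul_neg_iff, hc, hc.not_gt]
  · convert hneg using 2
    ext x; simp [mul_neg_iff, hc, hc.not_gt]

lemma mul_add_one_sub_le_one_sub_mul {p q δ : ℝ≥0∞} (hδp : δ ≤ p) (hp : p ≤ 1) (hq : q ≤ 1) :
    q * p + (1 - p) ≤ 1 - (1 - q) * δ := by
  have hsum : q * p + (1 - p) + (1 - q) * p = 1 := by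
    rw [add_right_comm, ← add_mul, add_tsub_cancel_of_le hq, one_mul, add_tsub_cancel_of_le hp]
  have hfin : (1 - q) * p ≠ ⊤ := ENNReal.mul_ne_top (ENNReal.sub_ne_top ENNReal.one_ne_top)
    (ne_top_of_le_ne_top ENNReal.one_ne_top hp)
  calc q * p + (1 - p) = 1 - (1 - q) * p := ENNReal.eq_sub_of_add_eq hfin hsum
    _ ≤ 1 - (1 - q) * δ := by gcongr

lemma lintegral_pow_ite_mul_neg_le {ν : Measure ℝ} [IsProbabilityMeasure ν] {q δ : ℝ≥0∞}
    (hq : q ≤ 1) (hpos : δ ≤ ν (Set.Ioi 0)) (hneg : δ ≤ ν (Set.Iio 0)) {c : ℝ} (hc : c ≠ 0) :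
    ∫⁻ x, q ^ (if c * x < 0 then 1 else 0) ∂ν ≤ 1 - (1 - q) * δ := by
  set A := {x : ℝ | c * x < 0}
  have hA : MeasurableSet A := measurableSet_lt (by fun_prop) measurable_const
  have h : (fun x ↦ q ^ (if c * x < 0 then 1 else 0)) = A.piecewise (fun _ ↦ q) (fun _ ↦ 1) := by
    ext x; by_cases hx : c * x < 0 <;> simp [A, Set.piecewise, hx]
  rw [h, lintegral_piecewise hA, setLIntegral_const, setLIntegral_const, one_mul,
    prob_compl_eq_one_sub hA]
  exact mul_add_one_sub_le_one_sub_mul (le_measure_setOf_mul_neg hpos hneg hc) prob_le_one hq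

theorem lintegral_pow_signChangesList_cons_le {q δ : ℝ≥0∞} (hq : q ≤ 1) {n : ℕ}
    (ν : Fin n → Measure ℝ) [∀ i, IsProbabilityMeasure (ν i)]
    (hpos : ∀ i, δ ≤ ν i (Set.Ioi 0)) (hneg : ∀ i, δ ≤ ν i (Set.Iio 0)) {c : ℝ} (hc : c ≠ 0) :
    ∫⁻ v, q ^ signChangesList (c :: List.ofFn v) ∂Measure.pi ν ≤ (1 - (1 - q) * δ) ^ n := by
  induction n generalizing c with
  | zero => simp [signChangesList_singleton]
  | succ n ih =>
    have hB : (1 - (1 - q) * δ) ^ n ≠ ⊤ :=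
      ENNReal.pow_ne_top (ENNReal.sub_ne_top ENNReal.one_ne_top)
    rw [lintegral_pi_fin_succ ν (measurable_const.pow (measurable_signChangesList_cons_ofFn c _))]
    calc ∫⁻ x, ∫⁻ t, q ^ signChangesList (c :: List.ofFn (Fin.cons x t : Fin (n + 1) → ℝ))
          ∂Measure.pi (fun i ↦ ν i.succ) ∂ν 0
        ≤ ∫⁻ x, q ^ (if c * x < 0 then 1 else 0) * (1 - (1 - q) * δ) ^ n ∂ν 0 := by
          refine lintegral_mono fun x ↦ ?_
          simp_rw [List.ofFn_cons, signChangesList_cons_cons, pow_add]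
          rw [lintegral_const_mul' _ _
            (ENNReal.pow_ne_top (ne_top_of_le_ne_top ENNReal.one_ne_top hq))]
          gcongr
          exact ih _ (fun i ↦ hpos _) (fun i ↦ hneg _) (by split_ifs <;> assumption)
      _ ≤ (1 - (1 - q) * δ) * (1 - (1 - q) * δ) ^ n := by
          rw [lintegral_mul_const' _ _ hB]
          gcongr
          exact lintegral_pow_ite_mul_neg_le hq (hpos 0) (hneg 0) hc
      _ = (1 - (1 - q) * δ) ^ (n + 1) := (pow_succ' _ _).symm

theorem lintegral_pow_signChangesList_cons_ofFn_le {Ω : Type*} [MeasurableSpace Ω]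
    {μ : Measure Ω} {R : ℕ} {Z : Fin R → Ω → ℝ} (hZ : ∀ r, Measurable (Z r))
    (hind : iIndepFun Z μ) {q δ : ℝ≥0∞} (hq : q ≤ 1) (hpos : ∀ r, δ ≤ μ {ω | 0 < Z r ω})
    (hneg : ∀ r, δ ≤ μ {ω | Z r ω < 0}) {c : ℝ} (hc : c ≠ 0) :
    ∫⁻ ω, q ^ signChangesList (c :: List.ofFn fun r ↦ Z r ω) ∂μ ≤ (1 - (1 - q) * δ) ^ R := by
  have := hind.isProbabilityMeasure
  have : ∀ r, IsProbabilityMeasure (μ.map (Z r)) :=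
    fun r ↦ Measure.isProbabilityMeasure_map (hZ r).aemeasurable
  rw [← lintegral_map (measurable_const.pow (measurable_signChangesList_cons_ofFn c R))
    (measurable_pi_lambda _ hZ), hind.map_fun_eq_pi_map fun r ↦ (hZ r).aemeasurable]
  refine lintegral_pow_signChangesList_cons_le hq _ (fun r ↦ ?_) (fun r ↦ ?_) hc
  · rw [Measure.map_apply (hZ r) measurableSet_Ioi]; exact hpos r
  · rw [Measure.map_apply (hZ r) measurableSet_Iio]; exact hneg r

lemma measure_natCast_le_le_exp_mul_lintegral {Ω : Type*} [MeasurableSpace Ω] {μ : Measure Ω}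
    {f : Ω → ℕ} (hf : Measurable f) (k : ℝ) :
    μ {ω | (f ω : ℝ) ≤ k}
      ≤ ENNReal.ofReal (Real.exp k) * ∫⁻ ω, ENNReal.ofReal (Real.exp (-1)) ^ f ω ∂μ := by
  have hsub : {ω | (f ω : ℝ) ≤ k}
      ⊆ {ω | ENNReal.ofReal (Real.exp (-k)) ≤ ENNReal.ofReal (Real.exp (-1)) ^ f ω} := by
    intro ω hω
    rw [Set.mem_ofPred_eq, ← ENNReal.ofReal_pow (Real.exp_nonneg _), ← Real.exp_nat_mul]
    exact ENNReal.ofReal_le_ofReal (Real.exp_le_exp.2 (by linarith [hω.out]))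
  calc μ {ω | (f ω : ℝ) ≤ k}
      = ENNReal.ofReal (Real.exp k) * (ENNReal.ofReal (Real.exp (-k)) * μ {ω | (f ω : ℝ) ≤ k}) := by
        rw [← mul_assoc, ← ENNReal.ofReal_mul (Real.exp_nonneg _), ← Real.exp_add, add_neg_cancel,
          Real.exp_zero, ENNReal.ofReal_one, one_mul]
    _ ≤ _ := by
        gcongr
        exact (mul_le_mul_right (measure_mono hsub) _).trans
          (mul_meas_ge_le_lintegral₀ (measurable_const.pow hf).aemeasurable _)

lemma one_sub_one_sub_mul_pow_le_exp {a δ : ℝ} (ha : 0 ≤ a) (ha1 : a ≤ 1) (hδ : 0 ≤ δ) (n : ℕ) :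
    (1 - (1 - ENNReal.ofReal a) * ENNReal.ofReal δ) ^ n
      ≤ ENNReal.ofReal (Real.exp (-((1 - a) * δ * n))) := by
  have hbase : 1 - (1 - ENNReal.ofReal a) * ENNReal.ofReal δ
      ≤ ENNReal.ofReal (Real.exp (-((1 - a) * δ))) := by
    rw [← ENNReal.ofReal_one, ← ENNReal.ofReal_sub _ ha, ← ENNReal.ofReal_mul' hδ,
      ← ENNReal.ofReal_sub _ (by nlinarith)]
    exact ENNReal.ofReal_le_ofReal (by linarith [Real.add_one_le_exp (-((1 - a) * δ))])
  calc _ ≤ ENNReal.ofReal (Real.exp (-((1 - a) * δ))) ^ n := by gcongr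
    _ = _ := by rw [← ENNReal.ofReal_pow (Real.exp_nonneg _), ← Real.exp_nat_mul]; ring_nf

/-- There is an absolute constant `C > 0` such that for independent real random
variables `Z_1, …, Z_R` with `P(Z_r > 0) ≥ δ` and `P(Z_r < 0) ≥ δ`, one has
`P(S⁻(Z_1, …, Z_R) ≤ δR/5) ≤ C e^{-δR/3}`, uniformly in `δ` and `R`. -/
theorem sign_changes_of_independent_rvs :
    ∃ C : ℝ, 0 < C ∧
      ∀ (δ : ℝ), 0 < δ →
      ∀ (R : ℕ) (Ω : Type) (mΩ : MeasurableSpace Ω) (μ : Measure Ω),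
        IsProbabilityMeasure μ →
      ∀ Z : Fin R → Ω → ℝ, (∀ r, Measurable (Z r)) →
        iIndepFun Z μ →
        (∀ r, ENNReal.ofReal δ ≤ μ {ω | 0 < Z r ω}) →
        (∀ r, ENNReal.ofReal δ ≤ μ {ω | Z r ω < 0}) →
        μ {ω | (signChangesFin (fun r => Z r ω) : ℝ) ≤ δ * R / 5}
          ≤ ENNReal.ofReal (C * Real.exp (-δ * R / 3)) := by
  refine ⟨Real.exp 1, Real.exp_pos 1, fun δ hδ R Ω _ μ _ Z hZ hind hpos hneg ↦ ?_⟩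
  set S : Ω → ℕ := fun ω ↦ signChangesList (1 :: List.ofFn fun r ↦ Z r ω)
  have hS : Measurable S :=
    (measurable_signChangesList_cons_ofFn 1 R).comp (measurable_pi_lambda _ hZ)
  have hevent : {ω | (signChangesFin (fun r => Z r ω) : ℝ) ≤ δ * R / 5}
      ⊆ {ω | (S ω : ℝ) ≤ δ * R / 5 + 1} := fun ω hω ↦ by
    have : (S ω : ℝ) ≤ signChangesFin (fun r => Z r ω) + 1 := by
      exact_mod_cast signChangesList_cons_le 1 _
    exact le_trans this (by linarith [hω.out])
  have he : Real.exp (-1) ≤ 1 := Real.exp_le_one_iff.2 (by norm_num)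
  calc μ {ω | (signChangesFin (fun r => Z r ω) : ℝ) ≤ δ * R / 5}
      ≤ μ {ω | (S ω : ℝ) ≤ δ * R / 5 + 1} := measure_mono hevent
    _ ≤ ENNReal.ofReal (Real.exp (δ * R / 5 + 1))
          * ∫⁻ ω, ENNReal.ofReal (Real.exp (-1)) ^ S ω ∂μ :=
        measure_natCast_le_le_exp_mul_lintegral hS _
    _ ≤ ENNReal.ofReal (Real.exp (δ * R / 5 + 1))
          * ENNReal.ofReal (Real.exp (-((1 - Real.exp (-1)) * δ * R))) := by
        gcongr
        exact (lintegral_pow_signChangesList_cons_ofFn_le hZ hind (ENNReal.ofReal_le_one.2 he)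
          hpos hneg one_ne_zero).trans
          (one_sub_one_sub_mul_pow_le_exp (Real.exp_nonneg _) he hδ.le R)
    _ ≤ ENNReal.ofReal (Real.exp 1 * Real.exp (-δ * R / 3)) := by
        rw [← ENNReal.ofReal_mul (Real.exp_nonneg _), ← Real.exp_add, ← Real.exp_add]
        refine ENNReal.ofReal_le_ofReal (Real.exp_le_exp.2 ?_)
        nlinarith [Real.exp_neg_one_lt_d9, mul_nonneg hδ.le (Nat.cast_nonneg R)]
end

section
/- Let m ≥ 1 be an integer and let κ_1, ..., κ_m be nonnegative real numbers. Define γ(s) = π^{−ms/2} ∏_{j=1}^{m} Γ((s + κ_j)/2) and, for y > 0, define W(y) = (1/(2π)) ∫_{−∞}^{∞} γ(2 + it) · y^{−(2+it)} dt (the inverse Mellin transform of γ along the vertical line Re(s) = 2). Then there exist constants A > 0 and C > 0 (depending only on m and the κ_j) such that |W(y)| ≤ C · e^{−mπ y^{2/m}} · y^{A} for all y > 1. -/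
/-!
Move the line of integration from `re s = 2` to `re s = σ` by Cauchy's theorem. This is legitimate
because `|Γ(s)| ≤ Γ(re s + 2) / (1 + (im s)²)` for `re s ≥ 1` (from `Γ(s + 2) = s (s + 1) Γ(s)`),
so on the whole strip the integrand is dominated by a multiple of `(1 + t²)⁻¹`. On the new line this
gives `|W(y)| ≤ 2 π^(-mσ/2) y^(-σ) ∏ⱼ Γ((σ + κⱼ)/2 + 2)`. Stirling's upper bound
`Γ(z) ≤ e² z^(z + 1/2) e^(-z)` together with the choice `σ = 2π y^(2/m)` collapses the exponential
factors to `exp (-mπ y^(2/m))`, and what is left is polynomial in `y`.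
-/

open Real Complex

/-- The archimedean factor `γ(s) = π^{-ms/2} ∏_j Γ((s + κ_j)/2)`. -/
noncomputable def gammaFactor (m : ℕ) (κ : Fin m → ℝ) (s : ℂ) : ℂ :=
  (Real.pi : ℂ) ^ (-(m : ℂ) * s / 2) * ∏ j, Complex.Gamma ((s + (κ j : ℂ)) / 2)

/-- The inverse Mellin transform of `γ` along the vertical line `Re(s) = 2`:
`W(y) = (1/2π) ∫_ℝ γ(2 + it) y^{-(2+it)} dt`. -/
noncomputable def WFun (m : ℕ) (κ : Fin m → ℝ) (y : ℝ) : ℂ :=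
  (1 / (2 * Real.pi)) •
    ∫ t : ℝ, gammaFactor m κ (2 + t * Complex.I) * (y : ℂ) ^ (-(2 + t * Complex.I))

open Set Filter Topology MeasureTheory
open scoped Nat

namespace Complex

theorem norm_Gamma_le_Gamma_re {s : ℂ} (hs : 0 < s.re) : ‖Gamma s‖ ≤ Real.Gamma s.re := by
  rw [Gamma_eq_integral hs, Real.Gamma_eq_integral hs, GammaIntegral]
  refine (norm_integral_le_integral_norm _).trans_eq
    (setIntegral_congr_fun measurableSet_Ioi fun x (hx : 0 < x) ↦ ?_)
  rw [norm_mul, norm_real, norm_cpow_eq_rpow_re_of_pos hx, Real.norm_of_nonneg (exp_pos _).le]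
  simp

theorem norm_Gamma_mul_sq_norm_le {s : ℂ} (hs : 0 < s.re) :
    ‖Gamma s‖ * ‖s‖ ^ 2 ≤ Real.Gamma (s.re + 2) := by
  have hs0 : s ≠ 0 := ne_of_apply_ne re (by rw [zero_re]; linarith)
  have hs1 : s + 1 ≠ 0 := ne_of_apply_ne re (by rw [add_re, one_re, zero_re]; linarith)
  have hle : ‖s‖ ≤ ‖s + 1‖ := by
    rw [← sq_le_sq₀ (norm_nonneg _) (norm_nonneg _), ← normSq_eq_norm_sq, ← normSq_eq_norm_sq,
      normSq_apply, normSq_apply]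
    simp only [add_re, one_re, add_im, one_im, add_zero, add_le_add_iff_right]
    nlinarith
  calc ‖Gamma s‖ * ‖s‖ ^ 2 ≤ ‖Gamma s‖ * (‖s + 1‖ * ‖s‖) := by
        gcongr; rw [sq]; gcongr
    _ = ‖Gamma (s + 2)‖ := by
        rw [show s + 2 = s + 1 + 1 by ring, Gamma_add_one _ hs1, Gamma_add_one _ hs0]
        simp only [norm_mul]; ring
    _ ≤ Real.Gamma (s.re + 2) := by
        simpa using norm_Gamma_le_Gamma_re (s := s + 2) (by simp only [add_re, re_ofNat]; linarith)

theorem norm_Gamma_le_div_one_add_sq {s : ℂ} (hs : 1 ≤ s.re) :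
    ‖Gamma s‖ ≤ Real.Gamma (s.re + 2) / (1 + s.im ^ 2) := by
  have h := norm_Gamma_mul_sq_norm_le (by linarith : 0 < s.re)
  rw [le_div_iff₀ (by positivity)]
  refine le_trans ?_ h
  gcongr
  rw [← normSq_eq_norm_sq, normSq_apply]
  nlinarith

end Complex

namespace Real

theorem factorial_le_exp_one_mul_sqrt {n : ℕ} (hn : n ≠ 0) :
    (n ! : ℝ) ≤ exp 1 * √n * (n / exp 1) ^ n := by
  obtain ⟨k, rfl⟩ := Nat.exists_eq_succ_of_ne_zero hn
  have hle : Stirling.stirlingSeq (k + 1) ≤ Stirling.stirlingSeq 1 :=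
    Stirling.stirlingSeq'_antitone (Nat.zero_le k)
  rw [Stirling.stirlingSeq_one, Stirling.stirlingSeq, div_le_iff₀ (by positivity)] at hle
  refine hle.trans_eq ?_
  rw [Real.sqrt_mul zero_le_two]
  field_simp

theorem Gamma_le_rpow_mul_exp {z : ℝ} (hz : 2 ≤ z) :
    Gamma z ≤ exp 2 * z ^ (z + 1 / 2) * exp (-z) := by
  set k := ⌈z⌉₊ - 1 with hk
  have hkz : (k : ℝ) < z ∧ z ≤ k + 1 := by
    have h1 := Nat.ceil_lt_add_one (by linarith : 0 ≤ z)
    have h2 := Nat.le_ceil z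
    have h3 : 1 ≤ ⌈z⌉₊ := Nat.one_le_iff_ne_zero.mpr (by positivity)
    rw [hk, Nat.cast_sub h3]; push_cast; constructor <;> linarith
  have hk1 : 1 ≤ k := by
    by_contra! h; interval_cases k; norm_num at hkz; linarith
  have hΓ : Gamma z ≤ k ! := by
    rw [← Gamma_nat_eq_factorial]
    exact Gamma_strictMonoOn_Ici.monotoneOn hz (mem_Ici.mpr (by linarith)) hkz.2
  have hpow : (k : ℝ) ^ k ≤ z ^ z := by
    calc (k : ℝ) ^ k ≤ z ^ k := pow_le_pow_left₀ k.cast_nonneg hkz.1.le k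
      _ = z ^ (k : ℝ) := (rpow_natCast z k).symm
      _ ≤ z ^ z := rpow_le_rpow_of_exponent_le (by linarith) hkz.1.le
  calc Gamma z ≤ exp 1 * √k * (k / exp 1) ^ k :=
        hΓ.trans (factorial_le_exp_one_mul_sqrt (by omega))
    _ = exp 1 * √k * (k ^ k * exp (-k)) := by
        rw [div_pow, ← exp_nat_mul, exp_neg, div_eq_mul_inv, mul_one]
    _ ≤ exp 1 * √z * (z ^ z * exp (1 - z)) := by
        gcongr
        · exact hkz.1.le
        · linarith [hkz.2]
    _ = exp 2 * z ^ (z + 1 / 2) * exp (-z) := by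
        rw [rpow_add (by linarith), ← sqrt_eq_rpow, sub_eq_add_neg, exp_add,
          show (2 : ℝ) = 1 + 1 by norm_num, exp_add]
        ring

/-- Shifting the argument by `c` costs only a polynomial factor, since `(1 + c / x) ^ x ≤ exp c`. -/
theorem Gamma_add_le {x c : ℝ} (hx : 0 < x) (hc : 0 ≤ c) (h2 : 2 ≤ x + c) :
    Gamma (x + c) ≤ exp 2 * (x + c) ^ (c + 1 / 2) * (x ^ x * exp (-x)) := by
  have hshift : (x + c) ^ x ≤ x ^ x * exp c := by
    have h : x + c ≤ x * exp (c / x) := by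
      have := add_one_le_exp (c / x)
      calc x + c = x * (c / x + 1) := by field_simp; ring
        _ ≤ x * exp (c / x) := by gcongr
    calc (x + c) ^ x ≤ (x * exp (c / x)) ^ x := by gcongr
      _ = x ^ x * exp c := by
        rw [mul_rpow hx.le (exp_pos _).le, ← exp_mul, div_mul_cancel₀ _ hx.ne']
  calc Gamma (x + c) ≤ exp 2 * (x + c) ^ (x + c + 1 / 2) * exp (-(x + c)) :=
        Gamma_le_rpow_mul_exp h2
    _ = exp 2 * (x + c) ^ (c + 1 / 2) * ((x + c) ^ x * exp (-c) * exp (-x)) := by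
        rw [add_assoc x, rpow_add (by linarith), neg_add, exp_add]; ring
    _ ≤ exp 2 * (x + c) ^ (c + 1 / 2) * (x ^ x * exp c * exp (-c) * exp (-x)) := by gcongr
    _ = exp 2 * (x + c) ^ (c + 1 / 2) * (x ^ x * exp (-x)) := by
        rw [mul_assoc (x ^ x), ← exp_add, add_neg_cancel, exp_zero, mul_one]

end Real

section VerticalShift

variable {E : Type*} [NormedAddCommGroup E] {f : ℂ → E} {a b : ℝ} {g : ℝ → ℝ}

theorem integrable_vertical_of_norm_le (hf : ContinuousOn f (re ⁻¹' {a})) (hg : Integrable g)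
    (hfg : ∀ z : ℂ, z.re = a → ‖f z‖ ≤ g z.im) : Integrable fun t : ℝ ↦ f (a + t * I) := by
  refine hg.mono' ?_ (.of_forall fun t ↦ by simpa using hfg (a + t * I) (by simp))
  refine (hf.comp_continuous (by fun_prop) fun t ↦ ?_).aestronglyMeasurable
  simp

theorem tendsto_integral_horizontal_of_norm_le [NormedSpace ℝ E]
    (hg0 : Tendsto g (cocompact ℝ) (𝓝 0)) (hfg : ∀ z : ℂ, z.re ∈ Icc a b → ‖f z‖ ≤ g z.im)
    (hab : a ≤ b) :
    Tendsto (fun T : ℝ ↦ ∫ x : ℝ in a..b, f (x + T * I)) (cocompact ℝ) (𝓝 0) := by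
  refine squeeze_zero_norm (fun T ↦ ?_) (by simpa using hg0.mul_const |b - a|)
  refine intervalIntegral.norm_integral_le_of_norm_le_const fun x hx ↦ ?_
  rw [uIoc_of_le hab] at hx
  simpa using hfg (x + T * I) (by simpa using Ioc_subset_Icc_self hx)

theorem integral_vertical_eq_of_norm_le [NormedSpace ℂ E] [CompleteSpace E] (hab : a ≤ b)
    (hf : DifferentiableOn ℂ f (re ⁻¹' Icc a b))
    (hg : Integrable g) (hg0 : Tendsto g (cocompact ℝ) (𝓝 0))
    (hfg : ∀ z : ℂ, z.re ∈ Icc a b → ‖f z‖ ≤ g z.im) :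
    ∫ t : ℝ, f (a + t * I) = ∫ t : ℝ, f (b + t * I) := by
  have hline : ∀ c ∈ Icc a b, Tendsto (fun T : ℝ ↦ ∫ t : ℝ in -T..T, f (c + t * I)) atTop
      (𝓝 (∫ t : ℝ, f (c + t * I))) := fun c hc ↦
    intervalIntegral_tendsto_integral
      (integrable_vertical_of_norm_le
        (hf.continuousOn.mono fun z (hz : z.re = c) ↦ show z.re ∈ Icc a b from hz ▸ hc) hg
        fun z hz ↦ hfg z (hz ▸ hc)) tendsto_neg_atTop_atBot tendsto_id
  have hrect : ∀ T : ℝ, (∫ x : ℝ in a..b, f (x + (-T) * I)) - (∫ x : ℝ in a..b, f (x + T * I)) +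
      I • (∫ t : ℝ in -T..T, f (b + t * I)) - I • (∫ t : ℝ in -T..T, f (a + t * I)) = 0 := by
    intro T
    have h := integral_boundary_rect_eq_zero_of_differentiableOn f (a + (-T) * I) (b + T * I)
      (hf.mono fun z hz ↦ by simpa [uIcc_of_le hab] using hz.1)
    simpa using h
  have hhor := tendsto_integral_horizontal_of_norm_le hg0 hfg hab
  rw [cocompact_eq_atBot_atTop, tendsto_sup] at hhor
  have hvert := ((hline b ⟨hab, le_rfl⟩).const_smul I).sub ((hline a ⟨le_rfl, hab⟩).const_smul I)
  have hvert0 : Tendsto (fun T : ℝ ↦ I • (∫ t : ℝ in -T..T, f (b + t * I)) -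
      I • (∫ t : ℝ in -T..T, f (a + t * I))) atTop (𝓝 0) := by
    have h := hhor.2.sub (hhor.1.comp tendsto_neg_atTop_atBot)
    rw [sub_zero] at h
    refine h.congr fun T ↦ ?_
    rw [← sub_eq_zero, ← neg_eq_zero, ← hrect T]
    simp only [Function.comp_apply, ofReal_neg, neg_mul]
    abel
  have h := tendsto_nhds_unique hvert hvert0
  rw [← smul_sub, smul_eq_zero, sub_eq_zero] at h
  exact (h.resolve_left I_ne_zero).symm

end VerticalShift

section GammaFactor

variable {m : ℕ} {κ : Fin m → ℝ}

noncomputable def gammaFactorMajorant (κ : Fin m → ℝ) (σ : ℝ) : ℝ :=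
  ∏ j, Real.Gamma ((σ + κ j) / 2 + 2)

theorem gammaFactorMajorant_nonneg (hκ : ∀ j, 0 ≤ κ j) {σ : ℝ} (hσ : 0 ≤ σ) :
    0 ≤ gammaFactorMajorant κ σ :=
  Finset.prod_nonneg fun j _ ↦ (Real.Gamma_pos_of_pos (by linarith [hκ j])).le

theorem gammaFactorMajorant_le_of_le (hκ : ∀ j, 0 ≤ κ j) {σ σ' : ℝ} (hσ : 0 ≤ σ) (hσσ' : σ ≤ σ') :
    gammaFactorMajorant κ σ ≤ gammaFactorMajorant κ σ' := by
  refine Finset.prod_le_prod (fun j _ ↦ (Real.Gamma_pos_of_pos ?_).le) fun j _ ↦ ?_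
  · linarith [hκ j]
  · exact Real.Gamma_strictMonoOn_Ici.monotoneOn (mem_Ici.mpr (by linarith [hκ j]))
      (mem_Ici.mpr (by linarith [hκ j])) (by linarith)

theorem norm_gammaFactor (s : ℂ) :
    ‖gammaFactor m κ s‖ = Real.pi ^ (-(m : ℝ) * s.re / 2) * ∏ j, ‖Gamma ((s + κ j) / 2)‖ := by
  rw [gammaFactor, norm_mul, norm_prod, norm_cpow_eq_rpow_re_of_pos Real.pi_pos]
  congr 2
  simp

theorem norm_gammaFactor_le (hm : m ≠ 0) (hκ : ∀ j, 0 ≤ κ j) {s : ℂ} (hs : 2 ≤ s.re) :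
    ‖gammaFactor m κ s‖ ≤
      4 * Real.pi ^ (-(m : ℝ) * s.re / 2) * gammaFactorMajorant κ s.re * (1 + s.im ^ 2)⁻¹ := by
  set q := (1 + (s.im / 2) ^ 2)⁻¹
  have hq : q ≤ 1 := inv_le_one_of_one_le₀ (by nlinarith)
  have hq4 : q ≤ 4 * (1 + s.im ^ 2)⁻¹ := by
    rw [inv_le_iff_one_le_mul₀ (by positivity)]
    field_simp
    nlinarith
  have hfactor : ∀ j, ‖Gamma ((s + κ j) / 2)‖ ≤ Real.Gamma ((s.re + κ j) / 2 + 2) * q := by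
    intro j
    have h := norm_Gamma_le_div_one_add_sq (s := (s + κ j) / 2)
      (by simp only [div_ofNat_re, add_re, ofReal_re]; linarith [hκ j])
    simpa [q, div_eq_mul_inv] using h
  have hprod : ∏ j, ‖Gamma ((s + κ j) / 2)‖ ≤ gammaFactorMajorant κ s.re * q := by
    calc ∏ j, ‖Gamma ((s + κ j) / 2)‖ ≤ ∏ j, Real.Gamma ((s.re + κ j) / 2 + 2) * q :=
          Finset.prod_le_prod (fun _ _ ↦ norm_nonneg _) fun j _ ↦ hfactor j
      _ = gammaFactorMajorant κ s.re * q ^ m := by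
          rw [Finset.prod_mul_distrib, Finset.prod_const, Finset.card_fin, gammaFactorMajorant]
      _ ≤ gammaFactorMajorant κ s.re * q := by
          gcongr
          · exact gammaFactorMajorant_nonneg hκ (by linarith)
          · exact pow_le_of_le_one (by positivity) hq hm
  have hM := gammaFactorMajorant_nonneg hκ (σ := s.re) (by linarith)
  rw [norm_gammaFactor]
  calc _ ≤ Real.pi ^ (-(m : ℝ) * s.re / 2) * (gammaFactorMajorant κ s.re * q) := by gcongr
    _ ≤ Real.pi ^ (-(m : ℝ) * s.re / 2) *
          (gammaFactorMajorant κ s.re * (4 * (1 + s.im ^ 2)⁻¹)) := by gcongr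
    _ = _ := by ring

theorem differentiableAt_gammaFactor (hκ : ∀ j, 0 ≤ κ j) {s : ℂ} (hs : 0 < s.re) :
    DifferentiableAt ℂ (gammaFactor m κ) s := by
  refine ((differentiableAt_id.const_mul _).div_const _ |>.const_cpow
    (.inl (ofReal_ne_zero.mpr Real.pi_ne_zero))).mul (.fun_finsetProd fun j _ ↦ ?_)
  refine (differentiableAt_Gamma _ fun n h ↦ ?_).comp s
    ((differentiableAt_id.add_const _).div_const _)
  have := congrArg re h
  simp only [div_ofNat_re, add_re, ofReal_re, neg_re, natCast_re] at this
  linarith [hκ j, (n.cast_nonneg : (0 : ℝ) ≤ n)]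

end GammaFactor

section MellinIntegrand

variable {m : ℕ} {κ : Fin m → ℝ}

noncomputable def WIntegrand (m : ℕ) (κ : Fin m → ℝ) (y : ℝ) (s : ℂ) : ℂ :=
  gammaFactor m κ s * (y : ℂ) ^ (-s)

theorem WFun_eq_integral_WIntegrand (y : ℝ) :
    WFun m κ y = (1 / (2 * Real.pi)) • ∫ t : ℝ, WIntegrand m κ y ((2 : ℝ) + t * I) := by
  simp [WFun, WIntegrand]

theorem norm_WIntegrand_le (hm : m ≠ 0) (hκ : ∀ j, 0 ≤ κ j) {y : ℝ} (hy : 0 < y) {s : ℂ}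
    (hs : 2 ≤ s.re) :
    ‖WIntegrand m κ y s‖ ≤ 4 * Real.pi ^ (-(m : ℝ) * s.re / 2) * gammaFactorMajorant κ s.re *
      y ^ (-s.re) * (1 + s.im ^ 2)⁻¹ := by
  rw [WIntegrand, norm_mul, norm_cpow_eq_rpow_re_of_pos hy, neg_re]
  calc _ ≤ 4 * Real.pi ^ (-(m : ℝ) * s.re / 2) * gammaFactorMajorant κ s.re * (1 + s.im ^ 2)⁻¹ *
        y ^ (-s.re) := by gcongr; exact norm_gammaFactor_le hm hκ hs
    _ = _ := by ring

theorem norm_WIntegrand_le_of_re_mem (hm : m ≠ 0) (hκ : ∀ j, 0 ≤ κ j) {y σ : ℝ} (hy : 1 ≤ y)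
    {s : ℂ} (hs : s.re ∈ Icc 2 σ) :
    ‖WIntegrand m κ y s‖ ≤ 4 * gammaFactorMajorant κ σ * (1 + s.im ^ 2)⁻¹ := by
  refine (norm_WIntegrand_le hm hκ (by linarith) hs.1).trans ?_
  have hπ : Real.pi ^ (-(m : ℝ) * s.re / 2) ≤ 1 :=
    rpow_le_one_of_one_le_of_nonpos (by linarith [pi_gt_three])
      (by have : (0 : ℝ) ≤ m := m.cast_nonneg; nlinarith [hs.1])
  have hy' : y ^ (-s.re) ≤ 1 := rpow_le_one_of_one_le_of_nonpos hy (by linarith [hs.1])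
  have hM := gammaFactorMajorant_le_of_le hκ (by linarith [hs.1]) hs.2
  have hM0 := gammaFactorMajorant_nonneg hκ (σ := s.re) (by linarith [hs.1])
  have hMσ := hM0.trans hM
  calc _ ≤ 4 * 1 * gammaFactorMajorant κ σ * 1 * (1 + s.im ^ 2)⁻¹ := by gcongr
    _ = _ := by ring

theorem tendsto_const_mul_inv_one_add_sq (c : ℝ) :
    Tendsto (fun t : ℝ ↦ c * (1 + t ^ 2)⁻¹) (cocompact ℝ) (𝓝 0) := by
  have h : Tendsto (fun t : ℝ ↦ 1 + t ^ 2) (cocompact ℝ) atTop := by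
    refine tendsto_atTop_add_const_left _ 1 ?_
    convert (tendsto_pow_atTop two_ne_zero).comp (tendsto_norm_cocompact_atTop (E := ℝ))
      using 1
    ext t
    simp
  simpa using h.inv_tendsto_atTop.const_mul c

theorem integral_WIntegrand_eq (hm : m ≠ 0) (hκ : ∀ j, 0 ≤ κ j) {y σ : ℝ} (hy : 1 ≤ y)
    (hσ : 2 ≤ σ) :
    ∫ t : ℝ, WIntegrand m κ y ((2 : ℝ) + t * I) = ∫ t : ℝ, WIntegrand m κ y (σ + t * I) := by
  refine integral_vertical_eq_of_norm_le hσ (fun s hs ↦ ?_)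
    (integrable_inv_one_add_sq.const_mul _) (tendsto_const_mul_inv_one_add_sq _)
    fun s hs ↦ norm_WIntegrand_le_of_re_mem hm hκ hy hs
  refine ((differentiableAt_gammaFactor hκ (by linarith [hs.1])).mul ?_).differentiableWithinAt
  exact differentiableAt_id.neg.const_cpow (.inl (ofReal_ne_zero.mpr (by linarith)))

theorem norm_WFun_le (hm : m ≠ 0) (hκ : ∀ j, 0 ≤ κ j) {y σ : ℝ} (hy : 1 ≤ y) (hσ : 2 ≤ σ) :
    ‖WFun m κ y‖ ≤ 2 * Real.pi ^ (-(m : ℝ) * σ / 2) * gammaFactorMajorant κ σ * y ^ (-σ) := by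
  set c := 4 * Real.pi ^ (-(m : ℝ) * σ / 2) * gammaFactorMajorant κ σ * y ^ (-σ) with hc
  have hline : ‖∫ t : ℝ, WIntegrand m κ y (σ + t * I)‖ ≤ c * Real.pi := by
    rw [← integral_univ_inv_one_add_sq, ← integral_const_mul]
    refine norm_integral_le_of_norm_le (integrable_inv_one_add_sq.const_mul c) (.of_forall ?_)
    intro t
    refine (norm_WIntegrand_le hm hκ (y := y) (s := σ + t * I) (by linarith) (by simpa)).trans_eq ?_
    simp [hc]
  rw [WFun_eq_integral_WIntegrand, integral_WIntegrand_eq hm hκ hy hσ, norm_smul,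
    Real.norm_of_nonneg (by positivity)]
  calc _ ≤ 1 / (2 * Real.pi) * (c * Real.pi) := by gcongr
    _ = _ := by rw [hc]; field_simp; ring

end MellinIntegrand

theorem gammaFactorMajorant_two_mul_le {m : ℕ} {κ : Fin m → ℝ} (hκ : ∀ j, 0 ≤ κ j) {x : ℝ}
    (hx : 0 < x) :
    gammaFactorMajorant κ (2 * x) ≤ Real.exp 2 ^ m * (x ^ x * Real.exp (-x)) ^ m *
      ∏ j, (x + (κ j / 2 + 2)) ^ (κ j / 2 + 2 + 1 / 2) := by
  calc gammaFactorMajorant κ (2 * x)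
      ≤ ∏ j, (Real.exp 2 * (x ^ x * Real.exp (-x))) *
          (x + (κ j / 2 + 2)) ^ (κ j / 2 + 2 + 1 / 2) := by
        refine Finset.prod_le_prod (fun j _ ↦ (Real.Gamma_pos_of_pos ?_).le) fun j _ ↦ ?_
        · linarith [hκ j]
        · have h := Real.Gamma_add_le hx (c := κ j / 2 + 2) (by linarith [hκ j])
            (by linarith [hκ j])
          rw [show (2 * x + κ j) / 2 + 2 = x + (κ j / 2 + 2) by ring]
          linarith
    _ = _ := by rw [Finset.prod_mul_distrib, Finset.prod_const, Finset.card_fin, mul_pow]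

/-- At `x = π y ^ (2 / m)` the exponential factors of Stirling's formula and of
`π ^ (-m x) y ^ (-2 x)` cancel, leaving `exp (-m x)`: this is why the contour is moved to the line
`re s = 2 π y ^ (2 / m)`. -/
theorem pi_rpow_mul_rpow_mul_pow_eq_exp {m : ℕ} (hm : m ≠ 0) {x y : ℝ} (hy : 0 < y)
    (hx : x = Real.pi * y ^ ((2 : ℝ) / m)) :
    Real.pi ^ (-(m : ℝ) * (2 * x) / 2) * y ^ (-(2 * x)) * (x ^ x * Real.exp (-x)) ^ m =
      Real.exp (-(m : ℝ) * Real.pi * y ^ ((2 : ℝ) / m)) := by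
  rw [mul_assoc _ Real.pi, ← hx]
  have hx0 : 0 < x := hx ▸ by positivity
  have hlog : Real.log x = Real.log Real.pi + 2 / m * Real.log y := by
    rw [hx, Real.log_mul Real.pi_ne_zero (by positivity), Real.log_rpow hy]
  rw [Real.rpow_def_of_pos Real.pi_pos, Real.rpow_def_of_pos hy, Real.rpow_def_of_pos hx0,
    ← Real.exp_add, ← Real.exp_add, ← Real.exp_nat_mul, ← Real.exp_add, Real.exp_eq_exp, hlog]
  field_simp
  ring

theorem prod_rpow_le_mul_rpow_sum {ι : Type*} [Fintype ι] {a u y : ℝ} {c : ι → ℝ} (ha : 0 ≤ a)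
    (hc : ∀ j, 0 ≤ c j) (hy : 0 < y) (hu : 1 ≤ u) (huy : u ≤ y ^ 2) :
    ∏ j, (a * u + c j) ^ (c j + 1 / 2) ≤
      (∏ j, (a + c j) ^ (c j + 1 / 2)) * y ^ (∑ j, (2 * c j + 1)) := by
  rw [Real.rpow_sum_of_pos hy, ← Finset.prod_mul_distrib]
  refine Finset.prod_le_prod (fun j _ ↦ by have := hc j; positivity) fun j _ ↦ ?_
  calc (a * u + c j) ^ (c j + 1 / 2) ≤ ((a + c j) * y ^ 2) ^ (c j + 1 / 2) := by
        have := hc j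
        gcongr
        nlinarith
    _ = (a + c j) ^ (c j + 1 / 2) * y ^ (2 * c j + 1) := by
        rw [Real.mul_rpow (by linarith [hc j]) (by positivity), ← Real.rpow_natCast,
          ← Real.rpow_mul hy.le]
        congr 2
        push_cast; ring

/-- Rapid decay of the inverse Mellin transform of the gamma factor:
`|W(y)| ≤ C e^{-mπ y^{2/m}} y^A` for `y > 1`. -/
theorem WFun_bound (m : ℕ) (hm : 1 ≤ m) (κ : Fin m → ℝ) (hκ : ∀ j, 0 ≤ κ j) :
    ∃ A : ℝ, 0 < A ∧ ∃ C : ℝ, 0 < C ∧ ∀ y : ℝ, 1 < y →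
      ‖WFun m κ y‖ ≤ C * Real.exp (-(m : ℝ) * Real.pi * y ^ ((2 : ℝ) / m)) * y ^ A := by
  have hm0 : m ≠ 0 := by omega
  set c : Fin m → ℝ := fun j ↦ κ j / 2 + 2
  have hc : ∀ j, 0 ≤ c j := fun j ↦ by simp only [c]; linarith [hκ j]
  have : Nonempty (Fin m) := ⟨⟨0, hm⟩⟩
  refine ⟨∑ j, (2 * c j + 1), Finset.sum_pos (fun j _ ↦ by linarith [hc j]) Finset.univ_nonempty,
    2 * Real.exp 2 ^ m * ∏ j, (Real.pi + c j) ^ (c j + 1 / 2),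
    mul_pos (by positivity) (Finset.prod_pos fun j _ ↦ by have := hc j; positivity), ?_⟩
  intro y hy
  set u := y ^ ((2 : ℝ) / m)
  set x := Real.pi * u with hx
  have hu : 1 ≤ u := Real.one_le_rpow hy.le (by positivity)
  have huy : u ≤ y ^ 2 := by
    rw [← Real.rpow_two]
    exact Real.rpow_le_rpow_of_exponent_le hy.le
      (div_le_self zero_le_two (Nat.one_le_cast.mpr hm))
  calc ‖WFun m κ y‖
      ≤ 2 * Real.pi ^ (-(m : ℝ) * (2 * x) / 2) * gammaFactorMajorant κ (2 * x) * y ^ (-(2 * x)) :=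
        norm_WFun_le hm0 hκ hy.le (by nlinarith [Real.pi_gt_three])
    _ ≤ 2 * Real.pi ^ (-(m : ℝ) * (2 * x) / 2) * (Real.exp 2 ^ m * (x ^ x * Real.exp (-x)) ^ m *
          ∏ j, (x + c j) ^ (c j + 1 / 2)) * y ^ (-(2 * x)) := by
        gcongr
        exact gammaFactorMajorant_two_mul_le hκ (by positivity)
    _ = 2 * Real.exp 2 ^ m * Real.exp (-(m : ℝ) * Real.pi * u) *
          ∏ j, (Real.pi * u + c j) ^ (c j + 1 / 2) := by
        rw [← pi_rpow_mul_rpow_mul_pow_eq_exp hm0 (by linarith) hx]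
        ring
    _ ≤ 2 * Real.exp 2 ^ m * Real.exp (-(m : ℝ) * Real.pi * u) *
          ((∏ j, (Real.pi + c j) ^ (c j + 1 / 2)) * y ^ (∑ j, (2 * c j + 1))) := by
        gcongr
        exact prod_rpow_le_mul_rpow_sum Real.pi_pos.le hc (by linarith) hu huy
    _ = _ := by ring
end

section
/- Let m ≥ 1 be an integer and let D be a squarefree integer with D ≡ 3 (mod 4) and D > 4m. Then the number of nonzero ideals I of the ring of integers of the imaginary quadratic field ℚ(√−D) with absolute norm N(I) = m that are principal equals 1 if m is a perfect square, and equals 0 otherwise. -/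
/-!
A principal ideal `(x)` has norm `|N(x)|`. Writing `x = a + bα` with `a, b ∈ ℚ`, both
`N(x) = a² + Db²` and `N(x + 1) - N(x) - 1 = 2a` are integers, hence so is `D(2b)²`, and
squarefreeness of `D` makes `2b` an integer. Then `D(2b)² ≤ 4N(x) < D` forces `b = 0`, so `x` is a
rational integer `s` with `s² = m` and `(x) = (|s|)`: the ideals counted are the `(r)` with
`r ∈ ℕ`, `r² = m`.
-/

open NumberField Module

theorem Nat.ncard_setOf_mul_self_eq (m : ℕ) :
    {r : ℕ | r * r = m}.ncard = if IsSquare m then 1 else 0 := by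
  split_ifs with hm
  · obtain ⟨r, rfl⟩ := hm
    convert Set.ncard_singleton r
    ext s
    exact Nat.mul_self_inj
  · convert Set.ncard_empty ℕ
    ext s
    exact iff_false_intro fun hs => hm ⟨s, hs.symm⟩

theorem Ideal.span_singleton_natCast_natAbs {R : Type*} [CommRing R] (s : ℤ) :
    Ideal.span {(s.natAbs : R)} = Ideal.span {(s : R)} := by
  have := congrArg (Ideal.map (Int.castRingHom R)) (Int.span_natAbs s)
  rwa [Ideal.map_span, Ideal.map_span, Set.image_singleton, Set.image_singleton, eq_intCast,
    eq_intCast, Int.cast_natCast] at this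

theorem Rat.exists_intCast_eq_of_squarefree_mul_sq {D : ℕ} (hD : Squarefree D) {r : ℚ} {n : ℤ}
    (h : D * r ^ 2 = n) : ∃ s : ℤ, s = r := by
  have hD0 : (D : ℚ) ≠ 0 := by exact_mod_cast hD.ne_zero
  have hr : r ^ 2 = Rat.divInt n D := by
    rw [Rat.divInt_eq_div, ← h, Int.cast_natCast, mul_div_cancel_left₀ _ hD0]
  have hdvd : r.den * r.den ∣ D := by
    have := Rat.den_dvd n D
    rw [← hr, Rat.den_pow, sq] at this
    exact_mod_cast this
  exact ⟨r.num, Rat.coe_int_num_of_den_eq_one (Nat.isUnit_iff.mp (hD _ hdvd))⟩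

namespace QuadraticAlgebra

noncomputable def liftAlgEquiv {F K : Type*} [Field F] [Field K] [Algebra F K] {a b : F}
    [Fact (∀ r, r ^ 2 ≠ a + b * r)] (u : {u : K // u * u = a • 1 + b • u})
    (hK : finrank F K = 2) : QuadraticAlgebra F a b ≃ₐ[F] K :=
  have : FiniteDimensional F K := .of_finrank_pos (by omega)
  AlgEquiv.ofBijective (lift u) <|
    have hinj := (lift u).toRingHom.injective
    ⟨hinj, (LinearMap.injective_iff_surjective_of_finrank_eq_finrank
      (by rw [finrank_eq_two, hK]) (f := (lift u).toLinearMap)).mp hinj⟩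

theorem algebraNorm_eq_norm {R : Type*} [CommRing R] {a b : R} (z : QuadraticAlgebra R a b) :
    Algebra.norm R z = z.norm := by
  rw [Algebra.norm_apply]
  exact det_toLinearMap_eq_norm z

theorem exists_intCast_eq_of_norm_lt {D : ℕ} (hD : Squarefree D) (z : QuadraticAlgebra ℚ (-D) 0)
    {n n' : ℤ} (hn : z.norm = n) (hn' : (z + 1).norm = n') (hnD : 4 * n < D) :
    ∃ s : ℤ, (s : QuadraticAlgebra ℚ (-D) 0) = z := by
  obtain ⟨a, b⟩ := z
  simp only [norm_def, re_add, im_add, re_one, im_one] at hn hn'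
  obtain ⟨t, ht⟩ : ∃ t : ℤ, t = 2 * a := ⟨n' - n - 1, by push_cast; linear_combination hn - hn'⟩
  obtain ⟨u, hu⟩ := Rat.exists_intCast_eq_of_squarefree_mul_sq hD
    (r := 2 * b) (n := 4 * n - t ^ 2) (by push_cast; linear_combination 4 * hn + (t + 2 * a) * ht)
  have hu0 : u = 0 := by
    have huZ : 4 * n - t ^ 2 = D * u ^ 2 := by
      have : ((4 * n - t ^ 2 : ℤ) : ℚ) = (D * u ^ 2 : ℤ) := by
        push_cast; linear_combination -4 * hn - (t + 2 * a) * ht - D * (u + 2 * b) * hu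
      exact_mod_cast this
    by_contra hu0
    have : 0 < u ^ 2 := by positivity
    nlinarith [sq_nonneg t]
  have hb : b = 0 := by simp only [hu0, Int.cast_zero] at hu; linarith
  obtain ⟨s, hs⟩ := Rat.exists_intCast_eq_of_squarefree_mul_sq squarefree_one
    (r := a) (n := n) (by subst hb; push_cast; linear_combination hn)
  exact ⟨s, by ext <;> simp [hs, hb]⟩

end QuadraticAlgebra

theorem NumberField.RingOfIntegers.exists_intCast_eq_of_four_mul_natAbs_norm_lt {K : Type*}
    [Field K] [NumberField K] {D : ℕ} (hD : Squarefree D) {α : K} (hα : α ^ 2 = -(D : K))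
    (hK : finrank ℚ K = 2) (x : 𝓞 K) (hx : 4 * (Algebra.norm ℤ x).natAbs < D) :
    ∃ s : ℤ, (s : 𝓞 K) = x := by
  have : Fact (∀ r : ℚ, r ^ 2 ≠ -D + 0 * r) := ⟨fun r h => by
    have : (0 : ℚ) < D := by exact_mod_cast hD.ne_zero.bot_lt
    nlinarith [sq_nonneg r]⟩
  let e := QuadraticAlgebra.liftAlgEquiv (a := (-D : ℚ)) (b := 0) ⟨α, by simp [← sq, hα]⟩ hK
  have hnorm (y : 𝓞 K) : (e.symm y).norm = Algebra.norm ℤ y := by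
    rw [Algebra.coe_norm_int, ← QuadraticAlgebra.algebraNorm_eq_norm,
      Algebra.norm_eq_of_algEquiv e.symm]
  obtain ⟨s, hs⟩ := QuadraticAlgebra.exists_intCast_eq_of_norm_lt hD (e.symm x) (hnorm x)
    (by simpa using hnorm (x + 1)) (by omega)
  exact ⟨s, RingOfIntegers.ext <| by simpa using congrArg e hs⟩

theorem NumberField.RingOfIntegers.setOf_isPrincipal_absNorm_eq {K : Type*} [Field K]
    [NumberField K] {D : ℕ} (hD : Squarefree D) {α : K} (hα : α ^ 2 = -(D : K))
    (hK : finrank ℚ K = 2) {m : ℕ} (hm : 1 ≤ m) (hDm : 4 * m < D) :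
    {I : Ideal (𝓞 K) | Ideal.absNorm I = m ∧ I ≠ ⊥ ∧ Submodule.IsPrincipal I}
      = (fun r : ℕ => Ideal.span {(r : 𝓞 K)}) '' {r | r * r = m} := by
  have habsNorm (r : ℕ) : Ideal.absNorm (Ideal.span {(r : 𝓞 K)}) = r * r := by
    rw [Ideal.absNorm_span_natCast, RingOfIntegers.rank, hK, sq]
  ext I
  constructor
  · rintro ⟨hnorm, -, x, rfl⟩
    rw [Ideal.submodule_span_eq, Ideal.absNorm_span_singleton] at hnorm
    obtain ⟨s, rfl⟩ := exists_intCast_eq_of_four_mul_natAbs_norm_lt hD hα hK x (hnorm ▸ hDm)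
    refine ⟨s.natAbs, ?_, Ideal.span_singleton_natCast_natAbs s⟩
    show s.natAbs * s.natAbs = m
    rw [← habsNorm, Ideal.span_singleton_natCast_natAbs, Ideal.absNorm_span_singleton, hnorm]
  · rintro ⟨r, hr : r * r = m, rfl⟩
    refine ⟨habsNorm r ▸ hr, ?_, ⟨_, rfl⟩⟩
    rw [ne_eq, Ideal.span_singleton_eq_bot, Nat.cast_eq_zero]
    rintro rfl
    omega

theorem count_principal_ideals_of_norm_general (m : ℕ) (hm : 1 ≤ m)
    (D : ℕ) (hD : Squarefree D) (hDm : 4 * m < D)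
    (K : Type) [Field K] [NumberField K]
    (α : K) (hα : α ^ 2 = -(D : K)) (hdeg : Module.finrank ℚ K = 2) :
    {I : Ideal (𝓞 K) | Ideal.absNorm I = m ∧ I ≠ ⊥ ∧ Submodule.IsPrincipal I}.ncard
      = if IsSquare m then 1 else 0 := by
  have hsquareRoots : {r : ℕ | r * r = m}.Subsingleton := fun r hr s hs =>
    Nat.mul_self_inj.mp (hr.trans hs.symm)
  rw [RingOfIntegers.setOf_isPrincipal_absNorm_eq hD hα hdeg hm hDm,
    (hsquareRoots.injOn _).ncard_image, Nat.ncard_setOf_mul_self_eq]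

/-- For a squarefree `D ≡ 3 (mod 4)` with `D > 4m`, the number of nonzero principal
ideals of norm `m` in the ring of integers of the imaginary quadratic field
`ℚ(√-D)` (any number field of degree 2 over `ℚ` containing a square root of `-D`)
is `1` if `m` is a perfect square and `0` otherwise. -/
theorem count_principal_ideals_of_norm (m : ℕ) (hm : 1 ≤ m)
    (D : ℕ) (hD : Squarefree D) (hD4 : D % 4 = 3) (hDm : 4 * m < D)
    (K : Type) [Field K] [NumberField K]
    (α : K) (hα : α ^ 2 = -(D : K)) (hdeg : Module.finrank ℚ K = 2) :
    {I : Ideal (𝓞 K) | Ideal.absNorm I = m ∧ I ≠ ⊥ ∧ Submodule.IsPrincipal I}.ncard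
      = if IsSquare m then 1 else 0 :=
  count_principal_ideals_of_norm_general m hm D hD hDm K α hα hdeg
end

section
/- Let (a, b) ∈ ℤ² with 4a³ ≠ 27b². Then there exist a unique positive integer n and a unique minimal pair (a₀, b₀) ∈ ℤ² such that a = n⁴·a₀ and b = n⁶·b₀. -/
/-!
As `4a³ ≠ 27b²`, the pair `(a, b)` is nonzero, so the integers `d` with `d⁴ ∣ a` and `d⁶ ∣ b`
are bounded, and the largest one, `n`, gives a minimal pair `(a / n⁴, b / n⁶)`: a prime `p`
with `p⁴ ∣ a / n⁴` and `p⁶ ∣ b / n⁶` would make `p n` larger. For uniqueness, if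
`n⁴ a₀ = m⁴ a₁` and `n⁶ b₀ = m⁶ b₁`, write `n = g n'`, `m = g m'` with `n', m'` coprime; then
`n'⁴ ∣ a₁` and `n'⁶ ∣ b₁`, so `n' = 1` when `(a₁, b₁)` is minimal, that is `n ∣ m`. By symmetry
`n = m`, and then the pairs agree.
-/

/-- A pair `(a, b) ∈ ℤ²` is minimal if no prime `p` satisfies `p⁴ ∣ a` and `p⁶ ∣ b`. -/
def MinimalPair (a b : ℤ) : Prop :=
  ∀ p : ℕ, p.Prime → ¬((p : ℤ) ^ 4 ∣ a ∧ (p : ℤ) ^ 6 ∣ b)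

theorem IsCoprime.pow_dvd_of_pow_mul_eq_pow_mul {R : Type*} [CommSemiring R] {x y c₀ c₁ : R}
    (hxy : IsCoprime x y) (e : ℕ) (h : x ^ e * c₀ = y ^ e * c₁) : x ^ e ∣ c₁ :=
  hxy.pow.dvd_of_dvd_mul_left ⟨c₀, h.symm⟩

theorem Int.le_natAbs_of_pow_dvd {d k : ℕ} {a : ℤ} (hk : k ≠ 0) (ha : a ≠ 0)
    (h : (d : ℤ) ^ k ∣ a) : d ≤ a.natAbs :=
  (Nat.le_self_pow hk d).trans <|
    Nat.le_of_dvd (Int.natAbs_pos.2 ha) (by simpa using Int.natAbs_dvd_natAbs.2 h)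

namespace MinimalPair

theorem eq_one_of_pow_dvd {a b : ℤ} (hmin : MinimalPair a b) {d : ℕ}
    (ha : (d : ℤ) ^ 4 ∣ a) (hb : (d : ℤ) ^ 6 ∣ b) : d = 1 := by
  by_contra hd
  have hpd : (d.minFac : ℤ) ∣ d := Int.natCast_dvd_natCast.2 d.minFac_dvd
  exact hmin _ (Nat.minFac_prime hd)
    ⟨(pow_dvd_pow_of_dvd hpd 4).trans ha, (pow_dvd_pow_of_dvd hpd 6).trans hb⟩

theorem dvd_of_pow_mul_eq {a₀ b₀ a₁ b₁ : ℤ} {n m : ℕ} (hmin : MinimalPair a₁ b₁) (hn : 0 < n)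
    (ha : (n : ℤ) ^ 4 * a₀ = (m : ℤ) ^ 4 * a₁) (hb : (n : ℤ) ^ 6 * b₀ = (m : ℤ) ^ 6 * b₁) :
    n ∣ m := by
  obtain ⟨g, n', m', hg, hcop, rfl, rfl⟩ := Nat.exists_coprime' (Nat.gcd_pos_of_pos_left m hn)
  have hg : (g : ℤ) ≠ 0 := by exact_mod_cast hg.ne'
  have hcop : IsCoprime (n' : ℤ) m' := Nat.isCoprime_iff_coprime.2 hcop
  have ha' : (n' : ℤ) ^ 4 * a₀ = (m' : ℤ) ^ 4 * a₁ :=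
    mul_left_cancel₀ (pow_ne_zero 4 hg) (by push_cast at ha; linear_combination ha)
  have hb' : (n' : ℤ) ^ 6 * b₀ = (m' : ℤ) ^ 6 * b₁ :=
    mul_left_cancel₀ (pow_ne_zero 6 hg) (by push_cast at hb; linear_combination hb)
  obtain rfl := hmin.eq_one_of_pow_dvd (hcop.pow_dvd_of_pow_mul_eq_pow_mul 4 ha')
    (hcop.pow_dvd_of_pow_mul_eq_pow_mul 6 hb')
  exact ⟨m', by ring⟩

end MinimalPair

theorem exists_minimalPair_model {a b : ℤ} (hab : a ≠ 0 ∨ b ≠ 0) :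
    ∃ n : ℕ, 0 < n ∧ ∃ a₀ b₀ : ℤ, MinimalPair a₀ b₀ ∧
      a = (n : ℤ) ^ 4 * a₀ ∧ b = (n : ℤ) ^ 6 * b₀ := by
  classical
  set P : ℕ → Prop := fun d ↦ (d : ℤ) ^ 4 ∣ a ∧ (d : ℤ) ^ 6 ∣ b
  have hbound : ∀ d, P d → d ≤ a.natAbs + b.natAbs := by
    rintro d ⟨hda, hdb⟩
    rcases hab with ha | hb
    · exact (Int.le_natAbs_of_pow_dvd (by norm_num) ha hda).trans (Nat.le_add_right _ _)
    · exact (Int.le_natAbs_of_pow_dvd (by norm_num) hb hdb).trans (Nat.le_add_left _ _)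
  have hP1 : P 1 := by simp [P]
  set n := Nat.findGreatest P (a.natAbs + b.natAbs)
  have hn : 1 ≤ n := Nat.le_findGreatest (hbound 1 hP1) hP1
  obtain ⟨⟨a₀, ha⟩, ⟨b₀, hb⟩⟩ : P n := Nat.findGreatest_spec (hbound 1 hP1) hP1
  refine ⟨n, hn, a₀, b₀, fun p hp ⟨hpa, hpb⟩ ↦ ?_, ha, hb⟩
  have hPnp : P (n * p) := by
    simp only [P, ha, hb, Nat.cast_mul, mul_pow]
    exact ⟨mul_dvd_mul_left _ hpa, mul_dvd_mul_left _ hpb⟩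
  have := Nat.le_findGreatest (hbound _ hPnp) hPnp
  nlinarith [hp.two_le]

/-- Every pair `(a, b)` with `4a³ ≠ 27b²` is uniquely `(n⁴a₀, n⁶b₀)` for a positive
integer `n` and a minimal pair `(a₀, b₀)`. -/
theorem exists_unique_minimal_model (a b : ℤ) (h : 4 * a ^ 3 ≠ 27 * b ^ 2) :
    ∃! x : ℕ × ℤ × ℤ, 0 < x.1 ∧ MinimalPair x.2.1 x.2.2 ∧
      a = (x.1 : ℤ) ^ 4 * x.2.1 ∧ b = (x.1 : ℤ) ^ 6 * x.2.2 := by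
  have hab : a ≠ 0 ∨ b ≠ 0 := by
    contrapose! h
    simp [h.1, h.2]
  obtain ⟨n, hn, a₀, b₀, hmin, ha, hb⟩ := exists_minimalPair_model hab
  refine ⟨(n, a₀, b₀), ⟨hn, hmin, ha, hb⟩, ?_⟩
  rintro ⟨m, a₁, b₁⟩ ⟨hm, hmin', ha', hb'⟩
  obtain rfl : m = n := Nat.dvd_antisymm
    (hmin.dvd_of_pow_mul_eq hm (ha'.symm.trans ha) (hb'.symm.trans hb))
    (hmin'.dvd_of_pow_mul_eq hn (ha.symm.trans ha') (hb.symm.trans hb'))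
  have hm : (m : ℤ) ≠ 0 := by exact_mod_cast hm.ne'
  rw [ha, mul_right_inj' (pow_ne_zero 4 hm)] at ha'
  rw [hb, mul_right_inj' (pow_ne_zero 6 hm)] at hb'
  rw [ha', hb']
end
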